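/- arXiv:2601.09082 — 3 statements merged into one kernel-verified Lean document; each statement's English description precedes it below -/
import Mathlib

section
/- Let (X_i)_{i≥1} be independent and identically distributed nonnegative integrable real-valued random variables on a probability space, and let m ∈ ℝ satisfy E[X_1] > m. Then P(∀ n ≥ 1 : ∑_{i=1}^n X_i > n·m) > 0; in particular, with positive probability the running average (1/n)∑_{i=1}^n X_i exceeds m for every n ≥ 1. -/
/-!
By the strong law of large numbers, almost surely `∑_{i<n} X_{i+1} - n m → ∞`. Such a walk has
an index `k` after which it stays strictly above its value at `k`, and then every partial sum of
the shifted sequence `(X_{k+1+i})ᵢ` exceeds `n m`. So for some `k` this happens with positive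
probability; since the shifted sequence has the same law as the original one (the infinite
product of the common marginal), so does the event for `k = 0`.
-/

open MeasureTheory ProbabilityTheory Filter Topology Finset

lemma Filter.Tendsto.exists_forall_gt_apply_lt {α : Type*} [LinearOrder α] [NoMaxOrder α]
    {g : ℕ → α} (hg : Tendsto g atTop atTop) : ∃ k, ∀ n, k < n → g k < g n := by
  classical
  obtain ⟨N, hN⟩ := eventually_atTop.mp (hg.eventually_gt_atTop (g 0))
  -- the last index up to `N` at which `g` is at most `g 0`
  refine ⟨Nat.findGreatest (fun n => g n ≤ g 0) N, fun n hn => ?_⟩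
  have hk : g (Nat.findGreatest (fun n => g n ≤ g 0) N) ≤ g 0 :=
    Nat.findGreatest_spec (P := fun n => g n ≤ g 0) (Nat.zero_le N) le_rfl
  refine hk.trans_lt ?_
  by_cases hnN : n ≤ N
  · exact lt_of_not_ge (Nat.findGreatest_is_greatest hn hnN)
  · exact hN n (by omega)

lemma tendsto_sub_mul_atTop_of_tendsto_div {s : ℕ → ℝ} {a m : ℝ}
    (hs : Tendsto (fun n : ℕ => s n / n) atTop (𝓝 a)) (hm : m < a) :
    Tendsto (fun n : ℕ => s n - n * m) atTop atTop := by
  have hprod : Tendsto (fun n : ℕ => (n : ℝ) * (s n / n - m)) atTop atTop :=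
    tendsto_natCast_atTop_atTop.atTop_mul_pos (sub_pos.mpr hm) (hs.sub_const m)
  refine hprod.congr' ?_
  filter_upwards [eventually_ne_atTop 0] with n hn
  field_simp

lemma sum_Icc_one_eq_sum_range {M : Type*} [AddCommMonoid M] (f : ℕ → M) (n : ℕ) :
    ∑ i ∈ Icc 1 n, f i = ∑ i ∈ range n, f (i + 1) := by
  rw [← Ico_add_one_right_eq_Icc, sum_Ico_eq_sum_range]
  simp [add_comm]

def partialSumsAbove (m : ℝ) : Set (ℕ → ℝ) :=
  {x | ∀ n : ℕ, 1 ≤ n → (n : ℝ) * m < ∑ i ∈ range n, x i}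

lemma measurableSet_partialSumsAbove (m : ℝ) : MeasurableSet (partialSumsAbove m) := by
  simp only [partialSumsAbove, Set.ofPred_forall]
  refine MeasurableSet.iInter fun n => MeasurableSet.iInter fun _ => ?_
  exact measurableSet_lt measurable_const (Finset.measurable_sum _ fun i _ => measurable_pi_apply i)

lemma shift_mem_partialSumsAbove {x : ℕ → ℝ} {m : ℝ} {k : ℕ}
    (hk : ∀ n, k < n → ∑ i ∈ range k, x i - k * m < ∑ i ∈ range n, x i - n * m) :
    (fun i => x (k + i)) ∈ partialSumsAbove m := by
  intro n hn
  have := hk (k + n) (by omega)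
  rw [sum_range_add] at this
  push_cast at this
  linarith

lemma exists_shift_mem_partialSumsAbove {x : ℕ → ℝ} {a m : ℝ}
    (hx : Tendsto (fun n : ℕ => (∑ i ∈ range n, x i) / n) atTop (𝓝 a)) (hm : m < a) :
    ∃ k, (fun i => x (k + i)) ∈ partialSumsAbove m :=
  let ⟨k, hk⟩ := (tendsto_sub_mul_atTop_of_tendsto_div hx hm).exists_forall_gt_apply_lt
  ⟨k, shift_mem_partialSumsAbove hk⟩

section IID

variable {Ω : Type*} [MeasurableSpace Ω] {μ : Measure Ω} {Y : ℕ → Ω → ℝ}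

lemma identDistrib_shift (hmeas : ∀ i, Measurable (Y i)) (hindep : iIndepFun Y μ)
    (hident : ∀ i, IdentDistrib (Y i) (Y 0) μ μ) (k : ℕ) :
    IdentDistrib (fun ω i => Y (k + i) ω) (fun ω i => Y i ω) μ μ where
  aemeasurable_fst := (measurable_pi_lambda _ fun i => hmeas (k + i)).aemeasurable
  aemeasurable_snd := (measurable_pi_lambda _ hmeas).aemeasurable
  map_eq := by
    rw [(hindep.precomp (add_right_injective k)).map_fun_eq_infinitePi_map (fun i => hmeas _),
      hindep.map_fun_eq_infinitePi_map hmeas]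
    simp only [fun i => (hident i).map_eq]

theorem iid_measure_partialSumsAbove_pos [NeZero μ] (hmeas : ∀ i, Measurable (Y i))
    (hindep : iIndepFun Y μ) (hident : ∀ i, IdentDistrib (Y i) (Y 0) μ μ)
    (hint : Integrable (Y 0) μ) {m : ℝ} (hmean : m < μ[Y 0]) :
    0 < μ ((fun ω i => Y i ω) ⁻¹' partialSumsAbove m) := by
  have hshift : ∀ᵐ ω ∂μ, ∃ k, (fun i => Y (k + i) ω) ∈ partialSumsAbove m := by
    filter_upwards [strong_law_ae_real Y hint (fun i j hij => hindep.indepFun hij) hident]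
      with ω hω using exists_shift_mem_partialSumsAbove hω hmean
  obtain ⟨k, hk⟩ : ∃ k, μ ((fun ω i => Y (k + i) ω) ⁻¹' partialSumsAbove m) ≠ 0 := by
    by_contra! h
    have hnone : ∀ᵐ ω ∂μ, ∀ k, (fun i => Y (k + i) ω) ∉ partialSumsAbove m :=
      ae_all_iff.2 fun k => measure_eq_zero_iff_ae_notMem.1 (h k)
    obtain ⟨ω, ⟨k, hmem⟩, hnot⟩ := (hshift.and hnone).exists
    exact hnot k hmem
  rw [← (identDistrib_shift hmeas hindep hident k).measure_mem_eq
    (measurableSet_partialSumsAbove m)]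
  exact pos_iff_ne_zero.mpr hk

end IID

theorem iid_partial_sums_exceed_linear_forever_general
    {Ω : Type*} [MeasureSpace Ω] [IsProbabilityMeasure (ℙ : Measure Ω)]
    (X : ℕ → Ω → ℝ) (m : ℝ)
    (hmeas : ∀ i, Measurable (X i))
    (hindep : iIndepFun (fun (i : ℕ) => X (i + 1)) ℙ)
    (hident : ∀ i : ℕ, IdentDistrib (X (i + 1)) (X 1) ℙ ℙ)
    (hint : Integrable (X 1) ℙ)
    (hmean : m < ∫ ω, X 1 ω ∂ℙ) :
    0 < ℙ {ω | ∀ n : ℕ, 1 ≤ n → (n : ℝ) * m < ∑ i ∈ Finset.Icc 1 n, X i ω} := by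
  have key := iid_measure_partialSumsAbove_pos (Y := fun i => X (i + 1))
    (fun i => hmeas _) hindep hident hint hmean
  convert key using 2
  ext ω
  simp only [partialSumsAbove, sum_Icc_one_eq_sum_range, Set.mem_ofPred_eq, Set.mem_preimage]

/-- Punctured-arrival-process lemma, abstract form: if `X i` are i.i.d. nonnegative
integrable random variables with `E[X 1] > m`, then with probability greater than `0`
the partial sums satisfy `∑_{i=1}^n X i > n * m` for every `n ≥ 1`. -/
theorem iid_partial_sums_exceed_linear_forever
    {Ω : Type*} [MeasureSpace Ω] [IsProbabilityMeasure (ℙ : Measure Ω)]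
    (X : ℕ → Ω → ℝ) (m : ℝ)
    (hmeas : ∀ i, Measurable (X i))
    (hindep : iIndepFun (fun (i : ℕ) => X (i + 1)) ℙ)
    (hident : ∀ i : ℕ, IdentDistrib (X (i + 1)) (X 1) ℙ ℙ)
    (hnn : ∀ i, ∀ᵐ ω ∂ℙ, 0 ≤ X i ω)
    (hint : Integrable (X 1) ℙ)
    (hmean : m < ∫ ω, X 1 ω ∂ℙ) :
    0 < ℙ {ω | ∀ n : ℕ, 1 ≤ n → (n : ℝ) * m < ∑ i ∈ Finset.Icc 1 n, X i ω} :=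
  iid_partial_sums_exceed_linear_forever_general X m hmeas hindep hident hint hmean
end

section
/- Let (X_i)_{i≥1} be independent and identically distributed integrable real-valued random variables on a probability space with E[X_1] < 0. Then P(∀ n ≥ 1 : ∑_{i=1}^n X_i < 0) > 0. -/
/-!
Write `Sₙ = X₁ + ⋯ + Xₙ`. By the strong law, `Sₙ / n → 𝔼[X₁] < 0`, so almost surely
`Sₙ < 0` for all large `n`; then the walk restarted at the last time `k` with `Sₖ ≥ 0` stays
strictly below its starting value forever. Hence almost surely some restarted walk stays
negative. The walk restarted at `k` has the same law as the original one (both are the product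
of the common law of the increments), so all these events have the same probability, which
cannot be `0`.
-/

open MeasureTheory ProbabilityTheory Filter Finset

lemma exists_forall_add_lt_of_eventually_lt {α : Type*} [LinearOrder α] {S : ℕ → α}
    (h : ∀ᶠ n in atTop, S n < S 0) : ∃ k, ∀ n, 0 < n → S (k + n) < S k := by
  obtain ⟨N, hN⟩ := h.exists_forall_of_atTop
  set k := Nat.findGreatest (fun k => S 0 ≤ S k) N
  have hk : S 0 ≤ S k := Nat.findGreatest_spec (P := fun k => S 0 ≤ S k) (Nat.zero_le N) le_rfl
  refine ⟨k, fun n hn => lt_of_lt_of_le ?_ hk⟩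
  by_cases hkn : k + n ≤ N
  · exact not_le.1 (Nat.findGreatest_is_greatest (P := fun k => S 0 ≤ S k) (by omega) hkn)
  · exact hN _ (by omega)

def walkStaysNeg : Set (ℕ → ℝ) := {y | ∀ n, 0 < n → ∑ j ∈ range n, y j < 0}

lemma measurableSet_walkStaysNeg : MeasurableSet walkStaysNeg := by
  simp only [walkStaysNeg, Set.ofPred_forall]
  exact .iInter fun n => .iInter fun _ => measurableSet_lt (by fun_prop) measurable_const

lemma exists_shift_mem_walkStaysNeg {y : ℕ → ℝ}
    (h : ∀ᶠ n in atTop, ∑ j ∈ range n, y j < 0) :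
    ∃ k, (fun i => y (k + i)) ∈ walkStaysNeg := by
  obtain ⟨k, hk⟩ :=
    exists_forall_add_lt_of_eventually_lt (S := fun n => ∑ j ∈ range n, y j) (by simpa using h)
  refine ⟨k, fun n hn => ?_⟩
  have := hk n hn
  simp only [sum_range_add] at this
  linarith

namespace ProbabilityTheory

variable {Ω : Type*} [MeasurableSpace Ω] {P : Measure Ω}

lemma iIndepFun.map_shift_eq_map {E : Type*} [MeasurableSpace E] {Y : ℕ → Ω → E}
    (hmeas : ∀ i, Measurable (Y i)) (hindep : iIndepFun Y P)
    (hident : ∀ i, IdentDistrib (Y i) (Y 0) P P) (k : ℕ) :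
    P.map (fun ω i => Y (k + i) ω) = P.map (fun ω i => Y i ω) := by
  rw [(hindep.precomp (add_right_injective k)).map_fun_eq_infinitePi_map (fun i => hmeas _),
    hindep.map_fun_eq_infinitePi_map hmeas]
  simp only [(hident _).map_eq]

lemma ae_eventually_sum_range_neg {Y : ℕ → Ω → ℝ} (hindep : iIndepFun Y P)
    (hident : ∀ i, IdentDistrib (Y i) (Y 0) P P) (hint : Integrable (Y 0) P)
    (hmean : P[Y 0] < 0) :
    ∀ᵐ ω ∂P, ∀ᶠ n in atTop, ∑ j ∈ range n, Y j ω < 0 := by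
  filter_upwards [strong_law_ae_real Y hint (fun i j hij => hindep.indepFun hij) hident]
    with ω hω
  filter_upwards [hω.eventually (gt_mem_nhds hmean), eventually_gt_atTop 0] with n hneg hn
  simpa using (div_lt_iff₀ (Nat.cast_pos.2 hn)).1 hneg

theorem measure_walkStaysNeg_pos [IsProbabilityMeasure P] {Y : ℕ → Ω → ℝ}
    (hmeas : ∀ i, Measurable (Y i)) (hindep : iIndepFun Y P)
    (hident : ∀ i, IdentDistrib (Y i) (Y 0) P P) (hint : Integrable (Y 0) P)
    (hmean : P[Y 0] < 0) :
    0 < P {ω | (fun i => Y i ω) ∈ walkStaysNeg} := by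
  set E : ℕ → Set Ω := fun k => {ω | (fun i => Y (k + i) ω) ∈ walkStaysNeg}
  have hE : ∀ k, P (E k) = P {ω | (fun i => Y i ω) ∈ walkStaysNeg} := fun k => by
    have hlaw := congrArg (· walkStaysNeg) (hindep.map_shift_eq_map hmeas hident k)
    rwa [Measure.map_apply (measurable_pi_lambda _ fun i => hmeas _) measurableSet_walkStaysNeg,
      Measure.map_apply (measurable_pi_lambda _ hmeas) measurableSet_walkStaysNeg] at hlaw
  have hcover : ∀ᵐ ω ∂P, ω ∈ ⋃ k, E k := by
    filter_upwards [ae_eventually_sum_range_neg hindep hident hint hmean] with ω hω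
    exact Set.mem_iUnion.2 (exists_shift_mem_walkStaysNeg hω)
  refine pos_iff_ne_zero.2 fun h0 => ?_
  have hnull : P (⋃ k, E k) = 0 := measure_iUnion_null fun k => (hE k).trans h0
  obtain ⟨ω, hin, hout⟩ := (hcover.and (measure_eq_zero_iff_ae_notMem.1 hnull)).exists
  exact hout hin

end ProbabilityTheory

/-- A random walk with i.i.d. integrable increments of strictly negative mean stays
strictly negative forever with probability greater than `0`. -/
theorem negative_drift_walk_stays_negative
    {Ω : Type*} [MeasureSpace Ω] [IsProbabilityMeasure (ℙ : Measure Ω)]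
    (X : ℕ → Ω → ℝ)
    (hmeas : ∀ i, Measurable (X i))
    (hindep : iIndepFun (fun (i : ℕ) => X (i + 1)) ℙ)
    (hident : ∀ i : ℕ, IdentDistrib (X (i + 1)) (X 1) ℙ ℙ)
    (hint : Integrable (X 1) ℙ)
    (hmean : ∫ ω, X 1 ω ∂ℙ < 0) :
    0 < ℙ {ω | ∀ n : ℕ, 1 ≤ n → ∑ i ∈ Finset.Icc 1 n, X i ω < 0} := by
  have hsum (n : ℕ) (ω : Ω) : ∑ i ∈ Icc 1 n, X i ω = ∑ j ∈ range n, X (j + 1) ω := by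
    rw [range_eq_Ico, sum_Ico_add' (fun i => X i ω), Ico_add_one_right_eq_Icc, zero_add]
  simpa only [walkStaysNeg, Set.mem_ofPred_eq, hsum, Nat.lt_iff_add_one_le, zero_add] using
    measure_walkStaysNeg_pos (fun i => hmeas (i + 1)) hindep hident hint hmean
end

section
/- Let λ > 0 and let (E_i)_{i≥1} be independent and identically distributed random variables, each with the exponential distribution of rate λ. Define the arrival times A_n = ∑_{i=1}^n E_i and the counting process N(t) = #{n ≥ 1 : A_n ≤ t} for t ≥ 0. Then for every ε > 0, the probability P(∀ t > 0 : N(t) ≤ (λ + ε)·t) is strictly greater than 0. -/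
/-!
Let `c = (λ + ε)⁻¹`, which is below the mean `λ⁻¹` of the interarrival times. By the strong law
of large numbers for `E₂, E₃, …`, almost surely their partial sums stay above `m c - M` for all
`m` and some `M ∈ ℕ`, so a single `M` does this with positive probability. That event depends only
on the tail `(E (i + 2))ᵢ`, hence is independent of `{E₁ > c + M}`, which has probability
`exp (-λ (c + M)) > 0`. On the intersection every arrival time satisfies `A n ≥ n c`, so
`N t ≤ t / c = (λ + ε) t`.
-/

open MeasureTheory ProbabilityTheory Filter Real Set Topology
open scoped ENNReal

namespace ProbabilityTheory

lemma integral_id_gammaMeasure {a r : ℝ} (ha : 0 < a) (hr : 0 < r) :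
    ∫ x, x ∂gammaMeasure a r = a / r := by
  have hdens : (fun x : ℝ => (gammaPDFReal a r x).toNNReal • x) =
      (Ioi 0).indicator (fun x => r ^ a / Gamma a * (x ^ ((a + 1) - 1) * exp (-(r * x)))) := by
    ext x
    rcases lt_or_ge 0 x with hx | hx
    · rw [indicator_of_mem (mem_Ioi.mpr hx), NNReal.smul_def, smul_eq_mul,
        Real.coe_toNNReal _ (gammaPDFReal_nonneg ha hr x), gammaPDFReal, if_pos hx.le,
        add_sub_cancel_right, rpow_sub_one hx.ne']
      field_simp
    · rw [indicator_of_notMem (notMem_Ioi.mpr hx)]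
      rcases hx.lt_or_eq with hx | rfl
      · simp [gammaPDFReal, if_neg (not_le.mpr hx)]
      · simp
  change ∫ x, x ∂(volume.withDensity fun x => ((gammaPDFReal a r x).toNNReal : ℝ≥0∞)) = a / r
  rw [integral_withDensity_eq_integral_smul (measurable_gammaPDFReal a r).real_toNNReal, hdens,
    integral_indicator measurableSet_Ioi, integral_const_mul,
    integral_rpow_mul_exp_neg_mul_Ioi (by positivity) hr, Gamma_add_one ha.ne', one_div,
    inv_rpow hr.le, rpow_add_one hr.ne']
  field_simp

lemma integral_id_expMeasure {r : ℝ} (hr : 0 < r) : ∫ x, x ∂expMeasure r = r⁻¹ :=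
  (integral_id_gammaMeasure one_pos hr).trans (one_div r)

lemma expMeasure_Ioi {r x : ℝ} (hr : 0 < r) (hx : 0 ≤ x) :
    expMeasure r (Ioi x) = ENNReal.ofReal (exp (-(r * x))) := by
  have := isProbabilityMeasure_expMeasure hr
  have hexp : exp (-(r * x)) ≤ 1 := exp_le_one_iff.mpr (by nlinarith)
  rw [← compl_Iic, prob_compl_eq_one_sub measurableSet_Iic, ← ofReal_cdf, cdf_expMeasure_eq hr,
    if_pos hx, ← ENNReal.ofReal_one, ← ENNReal.ofReal_sub _ (sub_nonneg.mpr hexp),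
    sub_sub_cancel]

lemma iIndepFun.indepFun_head_tail {Ω β : Type*} {mΩ : MeasurableSpace Ω} [MeasurableSpace β]
    {μ : Measure Ω} {X : ℕ → Ω → β} (h : iIndepFun X μ) (hX : ∀ i, Measurable (X i)) :
    IndepFun (X 0) (fun ω i => X (i + 1) ω) μ := by
  rw [iIndepFun_iff_iIndep] at h
  have hsplit := indep_iSup_of_disjoint (fun i => (hX i).comap_le) h
    (disjoint_compl_right (a := ({0} : Set ℕ)))
  rw [IndepFun_iff_Indep]
  refine indep_of_indep_of_le hsplit
    (le_biSup (fun j => MeasurableSpace.comap (X j) _) (mem_singleton 0)) ?_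
  rw [MeasurableSpace.pi, MeasurableSpace.comap_iSup, iSup_le_iff]
  intro i
  rw [MeasurableSpace.comap_comp]
  exact le_biSup (fun j => MeasurableSpace.comap (X j) _) (by simp : i + 1 ∈ ({0} : Set ℕ)ᶜ)

end ProbabilityTheory

lemma exists_nat_forall_mul_sub_le_of_tendsto {s : ℕ → ℝ} {L c : ℝ}
    (hs : Tendsto (fun n => s n / n) atTop (𝓝 L)) (hc : c < L) :
    ∃ M : ℕ, ∀ n, n * c - M ≤ s n := by
  have hev : ∀ᶠ n : ℕ in atTop, n * c - s n ≤ 0 := by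
    filter_upwards [hs.eventually (eventually_gt_nhds hc), eventually_gt_atTop 0] with n hn hn0
    rw [lt_div_iff₀ (by exact_mod_cast hn0)] at hn
    linarith
  obtain ⟨B, hB⟩ := (isBoundedUnder_of_eventually_le hev).bddAbove_range
  refine ⟨⌈B⌉₊, fun n => ?_⟩
  linarith [hB (mem_range_self n), Nat.le_ceil B]

lemma exists_measure_pos_forall_mul_sub_le_sum {Ω : Type*} {mΩ : MeasurableSpace Ω}
    {μ : Measure Ω} [NeZero μ] {Y : ℕ → Ω → ℝ} (hint : Integrable (Y 0) μ)
    (hindep : Pairwise (Function.onFun (· ⟂ᵢ[μ] ·) Y)) (hident : ∀ i, IdentDistrib (Y i) (Y 0) μ μ)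
    {c : ℝ} (hc : c < μ[Y 0]) :
    ∃ M : ℕ, 0 < μ {ω | ∀ n, n * c - M ≤ ∑ i ∈ Finset.range n, Y i ω} := by
  apply exists_measure_pos_of_not_measure_iUnion_null
  rw [Ne, measure_eq_zero_iff_ae_notMem]
  intro hnull
  have hcover : ∀ᵐ ω ∂μ, ω ∈ ⋃ M : ℕ, {ω | ∀ n, n * c - M ≤ ∑ i ∈ Finset.range n, Y i ω} :=
    (strong_law_ae_real Y hint hindep hident).mono fun ω hω =>
      mem_iUnion.mpr (exists_nat_forall_mul_sub_le_of_tendsto hω hc)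
  obtain ⟨ω, hω, hω'⟩ := (hcover.and hnull).exists
  exact hω' hω

lemma mul_le_sum_Icc_of_le_head_of_le_tail {e : ℕ → ℝ} {c : ℝ} {M : ℕ} (hhead : c + M ≤ e 1)
    (htail : ∀ m, m * c - M ≤ ∑ i ∈ Finset.range m, e (i + 2)) {n : ℕ} (hn : 1 ≤ n) :
    n * c ≤ ∑ i ∈ Finset.Icc 1 n, e i := by
  obtain ⟨m, rfl⟩ := Nat.exists_eq_add_of_le' hn
  rw [← Finset.Ico_add_one_right_eq_Icc, Finset.sum_Ico_eq_sum_range, add_tsub_cancel_right,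
    Finset.sum_range_succ']
  have := htail m
  simp only [add_comm 1, add_assoc, Nat.reduceAdd] at this ⊢
  push_cast
  linarith

lemma encard_setOf_sum_Icc_le_le {e : ℕ → ℝ} {c t : ℝ} (hc : 0 < c) (ht : 0 ≤ t)
    (h : ∀ n, 1 ≤ n → n * c ≤ ∑ i ∈ Finset.Icc 1 n, e i) :
    (({n : ℕ | 1 ≤ n ∧ ∑ i ∈ Finset.Icc 1 n, e i ≤ t}.encard : ℕ∞) : ℝ≥0∞) ≤
      ENNReal.ofReal (c⁻¹ * t) := by
  have hsub : {n : ℕ | 1 ≤ n ∧ ∑ i ∈ Finset.Icc 1 n, e i ≤ t} ⊆ Finset.Icc 1 ⌊c⁻¹ * t⌋₊ := by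
    rintro n ⟨hn, hnt⟩
    rw [Finset.coe_Icc, mem_Icc, Nat.le_floor_iff (by positivity), inv_mul_eq_div,
      le_div_iff₀ hc]
    exact ⟨hn, (h n hn).trans hnt⟩
  calc (({n : ℕ | 1 ≤ n ∧ ∑ i ∈ Finset.Icc 1 n, e i ≤ t}.encard : ℕ∞) : ℝ≥0∞)
      ≤ (((Finset.Icc 1 ⌊c⁻¹ * t⌋₊ : Set ℕ).encard : ℕ∞) : ℝ≥0∞) :=
        ENat.toENNReal_le.mpr (encard_le_encard hsub)
    _ = ENNReal.ofReal ⌊c⁻¹ * t⌋₊ := by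
      rw [encard_coe_eq_coe_finsetCard, Nat.card_Icc, add_tsub_cancel_right]; simp
    _ ≤ ENNReal.ofReal (c⁻¹ * t) := ENNReal.ofReal_le_ofReal (Nat.floor_le (by positivity))

/-- For a Poisson counting process of rate `λ` (built from i.i.d. exponential(`λ`)
interarrival times `E i`, arrival times `A n = ∑_{i=1}^n E i`, and counting process
`N t = #{n ≥ 1 : A n ≤ t}`), for every `ε > 0` the event that `N t ≤ (λ + ε) t` for
all `t > 0` has probability greater than `0`. -/
theorem poisson_counting_stays_below_rate
    {Ω : Type*} [MeasureSpace Ω] [IsProbabilityMeasure (ℙ : Measure Ω)]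
    (lam : ℝ) (hlam : 0 < lam)
    (E : ℕ → Ω → ℝ)
    (hmeas : ∀ i, Measurable (E i))
    (hindep : iIndepFun (fun (i : ℕ) => E (i + 1)) ℙ)
    (hdist : ∀ i : ℕ, Measure.map (E (i + 1)) ℙ = expMeasure lam)
    (ε : ℝ) (hε : 0 < ε) :
    0 < ℙ {ω | ∀ t : ℝ, 0 < t →
      (({n : ℕ | 1 ≤ n ∧ (∑ i ∈ Finset.Icc 1 n, E i ω) ≤ t}.encard : ℕ∞) : ℝ≥0∞)
        ≤ ENNReal.ofReal ((lam + ε) * t)} := by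
  set c := (lam + ε)⁻¹
  have hc : 0 < c := inv_pos.mpr (by linarith)
  have hlaw : ∀ i, IdentDistrib (E (i + 1)) id ℙ (expMeasure lam) := fun i =>
    ⟨(hmeas _).aemeasurable, aemeasurable_id, by rw [hdist, Measure.map_id]⟩
  have hmean : ∫ x, id x ∂expMeasure lam = lam⁻¹ := integral_id_expMeasure hlam
  obtain ⟨M, htail⟩ :=
    exists_measure_pos_forall_mul_sub_le_sum (Y := fun i => E (i + 2)) (c := c)
    ((hlaw 1).integrable_iff.mpr (.of_integral_ne_zero (by rw [hmean]; positivity)))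
    (fun i j hij => hindep.indepFun (by omega)) (fun i => (hlaw (i + 1)).trans (hlaw 1).symm)
    (by rw [(hlaw 1).integral_eq, hmean]; exact inv_strictAnti₀ hlam (by linarith : lam < lam + ε))
  have hhead : 0 < ℙ (E 1 ⁻¹' Ioi (c + M)) := by
    rw [← Measure.map_apply (hmeas 1) measurableSet_Ioi, hdist 0,
      expMeasure_Ioi hlam (by positivity)]
    simp [exp_pos]
  have hsplit := (hindep.indepFun_head_tail fun i => hmeas _).measure_inter_preimage_eq_mul
    (Ioi (c + M)) {x : ℕ → ℝ | ∀ m, m * c - M ≤ ∑ i ∈ Finset.range m, x i}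
    measurableSet_Ioi (by measurability)
  refine (ENNReal.mul_pos hhead.ne' htail.ne').trans_le (hsplit.symm.trans_le (measure_mono ?_))
  rintro ω ⟨hω_head, hω_tail⟩ t ht
  rw [← inv_inv (lam + ε)]
  exact encard_setOf_sum_Icc_le_le hc ht.le
    fun n => mul_le_sum_Icc_of_le_head_of_le_tail (e := (E · ω)) hω_head.le hω_tail
end
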